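/- arXiv:math/0305342 — 6 statements merged into one kernel-verified Lean document; each statement's English description precedes it below -/
import Mathlib

section
/- Let Z be a normed space and F a norm exposed face of the closed unit ball of Z (i.e. F = {f ∈ Z₁ : x(f) = 1} for some norm-one functional x ∈ Z*). If for each nonzero f in the real linear span of F there exist g, h in ℝ⁺·F with f = g - h and ‖f‖ = ‖g‖ + ‖h‖, then every element f of the closed unit ball of the real span of F lies in the convex hull of (I·F) ∪ (-I·F), where I = [0,1]. -/
/-- Lemma 2.5 (prop:1.11), (b) ⇒ (a): if every nonzero element of the real
span of a norm exposed face `F` has a Jordan-type decomposition `f = g - h`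
with `g, h ∈ ℝ⁺·F` and `‖f‖ = ‖g‖ + ‖h‖`, then the closed unit ball of the
real span of `F` is contained in `co (I·F ∪ -I·F)`, `I = [0,1]`. -/
theorem stmt0 {Z : Type*} [NormedAddCommGroup Z] [NormedSpace ℂ Z]
    [NormedSpace ℝ Z] [IsScalarTower ℝ ℂ Z]
    (x : Z →L[ℂ] ℂ) (hx : ‖x‖ = 1)
    (F : Set Z) (hF : F = {f | ‖f‖ ≤ 1 ∧ x f = 1}) (hFne : F.Nonempty)
    (hJD : ∀ f ∈ Submodule.span ℝ F, f ≠ 0 →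
      ∃ g ∈ {y : Z | ∃ t : ℝ, 0 ≤ t ∧ ∃ u ∈ F, y = t • u},
      ∃ h ∈ {y : Z | ∃ t : ℝ, 0 ≤ t ∧ ∃ u ∈ F, y = t • u},
        f = g - h ∧ ‖f‖ = ‖g‖ + ‖h‖) :
    ∀ f ∈ Submodule.span ℝ F, ‖f‖ ≤ 1 →
      f ∈ convexHull ℝ
        ({y : Z | ∃ t ∈ Set.Icc (0:ℝ) 1, ∃ u ∈ F, y = t • u} ∪
         {y : Z | ∃ t ∈ Set.Icc (0:ℝ) 1, ∃ u ∈ F, y = -(t • u)}) := by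
  intro f hf hfn
  set S : Set Z := ({y : Z | ∃ t ∈ Set.Icc (0:ℝ) 1, ∃ u ∈ F, y = t • u} ∪
         {y : Z | ∃ t ∈ Set.Icc (0:ℝ) 1, ∃ u ∈ F, y = -(t • u)}) with hS
  obtain ⟨u₀, hu₀⟩ := hFne
  have h0 : (0:Z) ∈ S := Or.inl ⟨0, ⟨le_refl 0, zero_le_one⟩, u₀, hu₀, (zero_smul ℝ u₀).symm⟩
  have h0' : (0:Z) ∈ convexHull ℝ S := subset_convexHull ℝ S h0
  by_cases hf0 : f = 0
  · simpa [hf0] using h0'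
  obtain ⟨g, ⟨s, hs, u, hu, hgu⟩, h, ⟨t, ht, v, hv, hhv⟩, hfgh, hnorm⟩ := hJD f hf hf0
  have hunorm : ∀ w ∈ F, ‖w‖ = 1 := by
    intro w hw
    rw [hF] at hw
    obtain ⟨hw1, hw2⟩ := hw
    refine le_antisymm hw1 ?_
    have := x.le_opNorm w
    rw [hw2, hx, one_mul] at this
    simpa using this
  have hgs : ‖g‖ = s := by
    rw [hgu, norm_smul, hunorm u hu, mul_one, Real.norm_eq_abs, abs_of_nonneg hs]
  have hht : ‖h‖ = t := by
    rw [hhv, norm_smul, hunorm v hv, mul_one, Real.norm_eq_abs, abs_of_nonneg ht]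
  have hst : s + t = ‖f‖ := by rw [hnorm, hgs, hht]
  have hstpos : 0 < s + t := by rw [hst]; exact norm_pos_iff.mpr hf0
  have hst1 : s + t ≤ 1 := hst ▸ hfn
  have huS : u ∈ convexHull ℝ S :=
    subset_convexHull ℝ S (Or.inl ⟨1, ⟨zero_le_one, le_refl 1⟩, u, hu, (one_smul ℝ u).symm⟩)
  have hvS : -v ∈ convexHull ℝ S :=
    subset_convexHull ℝ S (Or.inr ⟨1, ⟨zero_le_one, le_refl 1⟩, v, hv, by rw [one_smul]⟩)
  have hwmem : (s / (s + t)) • u + (t / (s + t)) • (-v) ∈ convexHull ℝ S :=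
    (convex_convexHull ℝ S) huS hvS (div_nonneg hs hstpos.le) (div_nonneg ht hstpos.le)
      (by field_simp)
  have hfmem := (convex_convexHull ℝ S) hwmem h0'
    (by positivity : (0:ℝ) ≤ s + t) (by linarith : (0:ℝ) ≤ 1 - (s + t)) (by ring)
  have key : (s + t) • ((s / (s + t)) • u + (t / (s + t)) • (-v)) + (1 - (s + t)) • (0:Z) = f := by
    rw [hfgh, hgu, hhv, smul_zero, add_zero, smul_add, smul_smul, smul_smul]
    rw [mul_div_cancel₀ _ hstpos.ne', mul_div_cancel₀ _ hstpos.ne']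
    module
  rwa [key] at hfmem
end

section
/- Let Z be a normed space and F a norm exposed face of the closed unit ball of Z. If every element of the closed unit ball of sp_ℝ F lies in co(I·F ∪ -I·F) (where I = [0,1]), then for each nonzero f ∈ sp_ℝ F of norm 1, f lies in the convex hull of F ∪ (-F). -/
/-- Lemma 2.5 (prop:1.11), (a) ⇒ (c): if the closed unit ball of the real span
of a norm exposed face `F` lies in `co (I·F ∪ -I·F)`, then every norm-one
element of the real span of `F` lies in `co (F ∪ -F)`. -/
theorem stmt1 {Z : Type*} [NormedAddCommGroup Z] [NormedSpace ℂ Z]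
    [NormedSpace ℝ Z] [IsScalarTower ℝ ℂ Z]
    (x : Z →L[ℂ] ℂ) (hx : ‖x‖ = 1)
    (F : Set Z) (hF : F = {f | ‖f‖ ≤ 1 ∧ x f = 1}) (hFne : F.Nonempty)
    (ha : ∀ f ∈ Submodule.span ℝ F, ‖f‖ ≤ 1 →
      f ∈ convexHull ℝ
        ({y : Z | ∃ t ∈ Set.Icc (0:ℝ) 1, ∃ u ∈ F, y = t • u} ∪
         {y : Z | ∃ t ∈ Set.Icc (0:ℝ) 1, ∃ u ∈ F, y = -(t • u)})) :
    ∀ f ∈ Submodule.span ℝ F, ‖f‖ = 1 → f ∈ convexHull ℝ (F ∪ (-F)) := by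
  -- norms of elements of F are ≤ 1
  have hFnorm : ∀ u ∈ F, ‖u‖ ≤ 1 := by
    intro u hu; rw [hF] at hu; exact hu.1
  intro f hf hnorm
  have hmem := ha f hf hnorm.le
  rw [convexHull_eq] at hmem
  obtain ⟨ι, t, w, z, hw, hw1, hz, hfz⟩ := hmem
  have h : ∀ i : ι, ∃ c : ℝ, ∃ v : Z,
      i ∈ t → c ∈ Set.Icc (0:ℝ) 1 ∧ v ∈ F ∪ (-F) ∧ z i = c • v := by
    intro i
    by_cases hi : i ∈ t
    · rcases hz i hi with hl | hr
      · obtain ⟨c, hc, u, hu, hzi⟩ := hl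
        exact ⟨c, u, fun _ => ⟨hc, Or.inl hu, hzi⟩⟩
      · obtain ⟨c, hc, u, hu, hzi⟩ := hr
        refine ⟨c, -u, fun _ => ⟨hc, Or.inr (by simpa using hu), ?_⟩⟩
        rw [hzi, smul_neg]
    · exact ⟨0, 0, fun h => absurd h hi⟩
  choose c v hcv using h
  have hfsum : f = ∑ i ∈ t, (w i * c i) • v i := by
    rw [← hfz, Finset.centerMass_eq_of_sum_1 _ _ hw1]
    apply Finset.sum_congr rfl
    intro i hi
    rw [(hcv i hi).2.2, smul_smul]
  have hv1 : ∀ i ∈ t, ‖v i‖ ≤ 1 := by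
    intro i hi
    rcases (hcv i hi).2.1 with h | h
    · exact hFnorm _ h
    · rw [← norm_neg]; exact hFnorm _ (Set.mem_neg.mp h)
  have hwc_nonneg : ∀ i ∈ t, 0 ≤ w i * c i :=
    fun i hi => mul_nonneg (hw i hi) (hcv i hi).1.1
  have hle1 : ∑ i ∈ t, w i * c i ≤ 1 := by
    rw [← hw1]
    exact Finset.sum_le_sum fun i hi =>
      mul_le_of_le_one_right (hw i hi) (hcv i hi).1.2
  have hge1 : 1 ≤ ∑ i ∈ t, w i * c i := by
    calc 1 = ‖f‖ := hnorm.symm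
    _ ≤ ∑ i ∈ t, ‖(w i * c i) • v i‖ := by
        rw [hfsum]; exact norm_sum_le _ _
    _ ≤ ∑ i ∈ t, w i * c i := by
        apply Finset.sum_le_sum; intro i hi
        rw [norm_smul, Real.norm_eq_abs, abs_of_nonneg (hwc_nonneg i hi)]
        exact mul_le_of_le_one_right (hwc_nonneg i hi) (hv1 i hi)
  have hsum1 : ∑ i ∈ t, w i * c i = 1 := le_antisymm hle1 hge1
  rw [convexHull_eq]
  exact ⟨ι, t, fun i => w i * c i, v, hwc_nonneg, hsum1,
    fun i hi => (hcv i hi).2.1,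
    by rw [Finset.centerMass_eq_of_sum_1 _ _ hsum1]; exact hfsum.symm⟩
end

section
/- Let X be a Banach space and let (P_i)_{i ∈ I} be a family of pairwise commuting contractive linear projections on X. Then the intersection W = ⋂_{i ∈ I} P_i*(X*) of the ranges of the adjoint projections is the range of a contractive projection on X*. -/
open NormedSpace Filter Topology

/-- Lemma 4.1: for a family of commuting contractive projections on a Banach
space `X`, the intersection of the ranges of the adjoint projections
`P_i* : φ ↦ φ ∘ P_i` is the range of a contractive projection on `X*`. -/
theorem stmt4 {X : Type*} [NormedAddCommGroup X] [NormedSpace ℝ X]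
    [CompleteSpace X] {I : Type*} (P : I → X →L[ℝ] X)
    (hproj : ∀ i, (P i).comp (P i) = P i)
    (hcontr : ∀ i, ‖P i‖ ≤ 1)
    (hcomm : ∀ i j, (P i).comp (P j) = (P j).comp (P i)) :
    ∃ R : StrongDual ℝ X →L[ℝ] StrongDual ℝ X, R.comp R = R ∧ ‖R‖ ≤ 1 ∧
      Set.range R = ⋂ i, Set.range (fun φ : StrongDual ℝ X => φ.comp (P i)) := by
  classical
  have hc : ∀ i j, Commute (P i) (P j) := fun i j => hcomm i j
  -- the finite products
  set T : Finset I → X →L[ℝ] X :=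
    fun F => F.noncommProd P (Set.pairwise_of_forall _ _ (fun i j => hc i j)) with hTdef
  have hT1 : ∀ F, ‖T F‖ ≤ 1 := by
    intro F
    induction F using Finset.induction_on with
    | empty =>
        simp only [hTdef, Finset.noncommProd_empty, ContinuousLinearMap.one_def]
        exact ContinuousLinearMap.norm_id_le
    | @insert a s hi ih =>
        simp only [hTdef, Finset.noncommProd_insert_of_notMem _ _ _ _ hi]
        calc ‖P a * s.noncommProd P _‖ ≤ ‖P a‖ * ‖s.noncommProd P _‖ :=
              norm_mul_le _ _
          _ ≤ 1 * 1 := by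
              exact mul_le_mul (hcontr a) ih (norm_nonneg _) zero_le_one
          _ = 1 := one_mul 1
  -- products absorb their factors
  have hTP : ∀ (F : Finset I) (i : I), i ∈ F → T F * P i = T F := by
    intro F i hi
    have hF : F = insert i (F.erase i) := (Finset.insert_erase hi).symm
    have hcomm' : Commute (P i) (T (F.erase i)) := by
      exact Finset.noncommProd_commute _ _ _ _ (fun j _ => hc i j)
    have hins : T F = P i * T (F.erase i) := by
      rw [hTdef]
      conv_lhs => rw [hF]
      exact Finset.noncommProd_insert_of_notMem _ _ _ _ (Finset.notMem_erase i F)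
    have hPP : P i * P i = P i := hproj i
    calc T F * P i = P i * T (F.erase i) * P i := by rw [hins]
      _ = P i * (T (F.erase i) * P i) := by rw [mul_assoc]
      _ = P i * (P i * T (F.erase i)) := by rw [hcomm'.eq]
      _ = (P i * P i) * T (F.erase i) := by rw [mul_assoc]
      _ = P i * T (F.erase i) := by rw [hPP]
      _ = T F := hins.symm
  -- invariant functionals are fixed by all products
  have hfix : ∀ (φ : StrongDual ℝ X), (∀ i, φ.comp (P i) = φ) →
      ∀ (F : Finset I) (x : X), φ (T F x) = φ x := by
    intro φ hφ F
    induction F using Finset.induction_on with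
    | empty =>
        intro x
        simp [hTdef, Finset.noncommProd_empty]
    | @insert a s hi ih =>
        intro x
        have : T (insert a s) = P a * T s := by
          rw [hTdef]; exact Finset.noncommProd_insert_of_notMem _ _ _ _ hi
        rw [this, ContinuousLinearMap.mul_apply]
        have h1 : φ (P a (T s x)) = φ (T s x) := by
          have := congrArg (fun ψ : StrongDual ℝ X => ψ (T s x)) (hφ a)
          simpa using this
        rw [h1, ih]
  -- the ultrafilter
  haveI : Nonempty (Finset I) := ⟨∅⟩
  let U : Ultrafilter (Finset I) := Ultrafilter.of atTop
  have hU : (U : Filter (Finset I)) ≤ atTop := Ultrafilter.of_le atTop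
  -- existence of limits
  have hex : ∀ (φ : StrongDual ℝ X) (x : X),
      ∃ a : ℝ, Tendsto (fun F => φ (T F x)) U (𝓝 a) := by
    intro φ x
    have hmem : ∀ F, φ (T F x) ∈ Set.Icc (-(‖φ‖ * ‖x‖)) (‖φ‖ * ‖x‖) := by
      intro F
      have h1 : |φ (T F x)| ≤ ‖φ‖ * ‖x‖ := by
        calc |φ (T F x)| = ‖φ (T F x)‖ := rfl
          _ ≤ ‖φ‖ * ‖T F x‖ := φ.le_opNorm _
          _ ≤ ‖φ‖ * (‖T F‖ * ‖x‖) := by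
              exact mul_le_mul_of_nonneg_left ((T F).le_opNorm x) (norm_nonneg φ)
          _ ≤ ‖φ‖ * (1 * ‖x‖) := by
              refine mul_le_mul_of_nonneg_left ?_ (norm_nonneg φ)
              exact mul_le_mul_of_nonneg_right (hT1 F) (norm_nonneg x)
          _ = ‖φ‖ * ‖x‖ := by ring
      exact abs_le.mp h1
    have hle : (U.map fun F => φ (T F x) : Filter ℝ) ≤
        𝓟 (Set.Icc (-(‖φ‖ * ‖x‖)) (‖φ‖ * ‖x‖)) := by
      rw [Filter.le_principal_iff]
      exact Filter.mem_map.2 (Filter.univ_mem' hmem)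
    obtain ⟨a, _, ha⟩ := isCompact_Icc.ultrafilter_le_nhds
      (U.map fun F => φ (T F x)) hle
    exact ⟨a, ha⟩
  choose L hL using hex
  -- basic properties of L
  have hLnorm : ∀ φ x, |L φ x| ≤ ‖φ‖ * ‖x‖ := by
    intro φ x
    have habs : Tendsto (fun F => |φ (T F x)|) U (𝓝 |L φ x|) :=
      (hL φ x).abs
    refine le_of_tendsto habs (Filter.Eventually.of_forall ?_)
    intro F
    calc |φ (T F x)| = ‖φ (T F x)‖ := rfl
      _ ≤ ‖φ‖ * ‖T F x‖ := φ.le_opNorm _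
      _ ≤ ‖φ‖ * (‖T F‖ * ‖x‖) :=
          mul_le_mul_of_nonneg_left ((T F).le_opNorm x) (norm_nonneg φ)
      _ ≤ ‖φ‖ * (1 * ‖x‖) := by
          refine mul_le_mul_of_nonneg_left ?_ (norm_nonneg φ)
          exact mul_le_mul_of_nonneg_right (hT1 F) (norm_nonneg x)
      _ = ‖φ‖ * ‖x‖ := by ring
  have hLaddx : ∀ φ x y, L φ (x + y) = L φ x + L φ y := by
    intro φ x y
    have h1 : Tendsto (fun F => φ (T F (x + y))) U (𝓝 (L φ x + L φ y)) := by
      have := (hL φ x).add (hL φ y)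
      refine this.congr fun F => ?_
      simp [map_add]
    exact tendsto_nhds_unique (hL φ (x + y)) h1
  have hLsmulx : ∀ φ (c : ℝ) x, L φ (c • x) = c * L φ x := by
    intro φ c x
    have h1 : Tendsto (fun F => φ (T F (c • x))) U (𝓝 (c * L φ x)) := by
      have := (hL φ x).const_mul c
      refine this.congr fun F => ?_
      simp [map_smul, smul_eq_mul]
    exact tendsto_nhds_unique (hL φ (c • x)) h1
  have hLaddφ : ∀ φ ψ x, L (φ + ψ) x = L φ x + L ψ x := by
    intro φ ψ x
    have h1 : Tendsto (fun F => (φ + ψ) (T F x)) U (𝓝 (L φ x + L ψ x)) := by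
      have := (hL φ x).add (hL ψ x)
      refine this.congr fun F => ?_
      simp
    exact tendsto_nhds_unique (hL (φ + ψ) x) h1
  have hLsmulφ : ∀ (c : ℝ) φ x, L (c • φ) x = c * L φ x := by
    intro c φ x
    have h1 : Tendsto (fun F => (c • φ) (T F x)) U (𝓝 (c * L φ x)) := by
      have := (hL φ x).const_mul c
      refine this.congr fun F => ?_
      simp [smul_eq_mul]
    exact tendsto_nhds_unique (hL (c • φ) x) h1
  -- build R φ as a continuous linear functional
  let Rfun : StrongDual ℝ X → StrongDual ℝ X := fun φ =>
    LinearMap.mkContinuous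
      { toFun := L φ
        map_add' := hLaddx φ
        map_smul' := fun c x => hLsmulx φ c x }
      ‖φ‖ (fun x => by simpa using hLnorm φ x)
  have hRfun_apply : ∀ φ x, Rfun φ x = L φ x := fun φ x => rfl
  have hRfun_norm : ∀ φ, ‖Rfun φ‖ ≤ ‖φ‖ := by
    intro φ
    exact LinearMap.mkContinuous_norm_le _ (norm_nonneg φ) _
  let R : StrongDual ℝ X →L[ℝ] StrongDual ℝ X :=
    LinearMap.mkContinuous
      { toFun := Rfun
        map_add' := fun φ ψ => by
          ext x; simp [hRfun_apply, hLaddφ]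
        map_smul' := fun c φ => by
          ext x; simp [hRfun_apply, hLsmulφ, smul_eq_mul] }
      1 (fun φ => by simpa using hRfun_norm φ)
  have hR_apply : ∀ φ x, R φ x = L φ x := fun φ x => rfl
  -- R fixes invariant functionals
  have hRfixed : ∀ φ : StrongDual ℝ X, (∀ i, φ.comp (P i) = φ) → R φ = φ := by
    intro φ hφ
    ext x
    have h1 : Tendsto (fun F => φ (T F x)) U (𝓝 (φ x)) := by
      have : (fun F : Finset I => φ (T F x)) = fun _ => φ x := by
        funext F; exact hfix φ hφ F x
      rw [this]; exact tendsto_const_nhds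
    exact tendsto_nhds_unique (hL φ x) h1
  -- R maps into the invariant functionals
  have hRinv : ∀ (φ : StrongDual ℝ X) (i : I), (R φ).comp (P i) = R φ := by
    intro φ i
    ext x
    show R φ (P i x) = R φ x
    rw [hR_apply, hR_apply]
    have hev : ∀ᶠ F in (U : Filter (Finset I)),
        φ (T F (P i x)) = φ (T F x) := by
      have hev' : ∀ᶠ F in (atTop : Filter (Finset I)), {i} ≤ F :=
        Filter.eventually_ge_atTop {i}
      refine Filter.Eventually.mono (hev'.filter_mono hU) ?_
      intro F hF
      have hi : i ∈ F := hF (Finset.mem_singleton_self i)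
      have : T F (P i x) = (T F * P i) x := rfl
      rw [this, hTP F i hi]
    have h1 : Tendsto (fun F => φ (T F (P i x))) U (𝓝 (L φ x)) :=
      (hL φ x).congr' (hev.mono fun F hF => hF.symm)
    exact tendsto_nhds_unique (hL φ (P i x)) h1
  -- membership characterization
  have hmemiff : ∀ (φ : StrongDual ℝ X) (i : I),
      (φ ∈ Set.range fun ψ : StrongDual ℝ X => ψ.comp (P i)) ↔ φ.comp (P i) = φ := by
    intro φ i
    constructor
    · rintro ⟨ψ, rfl⟩
      rw [ContinuousLinearMap.comp_assoc, hproj i]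
    · intro h
      exact ⟨φ, h⟩
  refine ⟨R, ?_, ?_, ?_⟩
  · have : ∀ φ, R (R φ) = R φ := fun φ => hRfixed (R φ) (hRinv φ)
    ext φ x
    show R (R φ) x = R φ x
    rw [this]
  · exact LinearMap.mkContinuous_norm_le _ zero_le_one _
  · ext φ
    simp only [Set.mem_iInter]
    constructor
    · rintro ⟨ψ, rfl⟩ i
      exact (hmemiff (R ψ) i).mpr (hRinv ψ i)
    · intro h
      have hφ : ∀ i, φ.comp (P i) = φ := fun i => (hmemiff φ i).mp (h i)
      exact ⟨φ, hRfixed φ hφ⟩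
end

section
/- Let X be a reflexive Banach space and let (P_i)_{i ∈ I} be a family of pairwise commuting contractive projections on X with ranges X_i = P_i(X). Then Y = ⋂_{i ∈ I} X_i is the range of a contractive projection on X. -/
/-!
The finite products `R F = ∏_{i ∈ F} P i` are contractions which fix every point of
`Y = ⋂ i, range (P i)` and satisfy `P i * R F = R F` as soon as `i ∈ F`. In a reflexive space
bounded sets are relatively weakly compact, so `R F` converges in the weak operator topology along
an ultrafilter finer than `atTop` on finite subsets. The limit `Q` is again a contraction, fixes
`Y` pointwise and maps into `Y`, hence is a contractive projection onto `Y`.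
-/

open Filter Function Topology NormedSpace

theorem IsIdempotentElem.mul_noncommProd_of_mem {ι M : Type*} [Monoid M] {s : Finset ι}
    {f : ι → M} (comm : (s : Set ι).Pairwise (Commute on f)) {i : ι} (hi : i ∈ s)
    (h : IsIdempotentElem (f i)) : f i * s.noncommProd f comm = s.noncommProd f comm := by
  classical
  rw [← s.mul_noncommProd_erase hi f comm, ← mul_assoc, h.eq]

theorem norm_noncommProd_le_one {ι 𝕜 E : Type*} [NontriviallyNormedField 𝕜]
    [SeminormedAddCommGroup E] [NormedSpace 𝕜 E] {s : Finset ι} {f : ι → E →L[𝕜] E}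
    (comm : (s : Set ι).Pairwise (Commute on f)) (h : ∀ i ∈ s, ‖f i‖ ≤ 1) :
    ‖s.noncommProd f comm‖ ≤ 1 :=
  s.noncommProd_induction f comm (‖·‖ ≤ 1)
    (fun _ _ ha hb ↦ (norm_mul_le _ _).trans (mul_le_one₀ ha (norm_nonneg _) hb))
    ContinuousLinearMap.norm_id_le h

theorem range_eq_iInter_range_of_commonFixedPoints {ι α : Type*} {P : ι → α → α} {Q : α → α}
    (hP : ∀ i x, P i (P i x) = P i x) (hPQ : ∀ i x, P i (Q x) = Q x)
    (hQ : ∀ x, (∀ i, P i x = x) → Q x = x) :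
    Set.range Q = ⋂ i, Set.range (P i) := by
  ext x
  simp only [Set.mem_range, Set.mem_iInter]
  constructor
  · rintro ⟨y, rfl⟩ i
    exact ⟨Q y, hPQ i y⟩
  · intro hx
    refine ⟨x, hQ x fun i ↦ ?_⟩
    obtain ⟨y, rfl⟩ := hx i
    exact hP i y

section WeakLimits

variable {𝕜 X : Type*} [RCLike 𝕜] [NormedAddCommGroup X] [NormedSpace 𝕜 X]

theorem exists_norm_le_tendsto_toWeakSpace
    (hrefl : Surjective (inclusionInDoubleDual 𝕜 X)) {α : Type*} (𝒰 : Ultrafilter α)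
    {u : α → X} {r : ℝ} (hu : ∀ a, ‖u a‖ ≤ r) :
    ∃ y : X, ‖y‖ ≤ r ∧
      Tendsto (fun a ↦ toWeakSpace 𝕜 X (u a)) 𝒰 (𝓝 (toWeakSpace 𝕜 X y)) := by
  -- Banach–Alaoglu in the bidual; reflexivity pulls the limit back to `X`.
  set ι := inclusionInDoubleDualWeak 𝕜 X
  have hball (a : α) : ι (toWeakSpace 𝕜 X (u a)) ∈
      WeakDual.toStrongDual ⁻¹' Metric.closedBall 0 r :=
    (mem_closedBall_zero_iff (E := StrongDual 𝕜 (StrongDual 𝕜 X))).2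
      ((double_dual_bound 𝕜 X (u a)).trans (hu a))
  obtain ⟨Ψ, hΨ, hlim⟩ := (WeakDual.isCompact_closedBall 0 r).ultrafilter_le_nhds
    (𝒰.map (fun a ↦ ι (toWeakSpace 𝕜 X (u a))))
    (le_principal_iff.2 (mem_map.2 (Eventually.of_forall hball)))
  obtain ⟨y, hy⟩ := hrefl (WeakDual.toStrongDual Ψ)
  have hιy : ι (toWeakSpace 𝕜 X y) = Ψ := hy
  refine ⟨y, ?_, (isEmbedding_inclusionInDoubleDualWeak 𝕜 X).tendsto_nhds_iff.2 ?_⟩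
  · rw [← (inclusionInDoubleDualLi 𝕜).norm_map y]
    have hΨr : ‖WeakDual.toStrongDual Ψ‖ ≤ r := mem_closedBall_zero_iff.1 hΨ
    rwa [← hy] at hΨr
  · rwa [comp_def, hιy]

variable {E : Type*} [NormedAddCommGroup E] [NormedSpace 𝕜 E]

theorem exists_norm_le_tendsto_toWeakSpace_apply
    (hrefl : Surjective (inclusionInDoubleDual 𝕜 X)) {α : Type*} (𝒰 : Ultrafilter α)
    (T : α → E →L[𝕜] X) {C : ℝ} (hT : ∀ a, ‖T a‖ ≤ C) :
    ∃ Q : E →L[𝕜] X, ‖Q‖ ≤ C ∧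
      ∀ x, Tendsto (fun a ↦ toWeakSpace 𝕜 X (T a x)) 𝒰 (𝓝 (toWeakSpace 𝕜 X (Q x))) := by
  choose q hq hlim using fun x ↦
    exists_norm_le_tendsto_toWeakSpace hrefl 𝒰 fun a ↦ (T a).le_of_opNorm_le (hT a) x
  let L : E →ₗ[𝕜] WeakSpace 𝕜 X := linearMapOfTendsto (fun x ↦ toWeakSpace 𝕜 X (q x))
    (fun a ↦ (toWeakSpace 𝕜 X).toLinearMap ∘ₗ (T a).toLinearMap) (tendsto_pi_nhds.2 hlim)
  have hC : 0 ≤ C := (norm_nonneg _).trans (hT (𝒰.nonempty_of_mem univ_mem).some)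
  refine ⟨((toWeakSpace 𝕜 X).symm.toLinearMap ∘ₗ L).mkContinuous C hq,
    LinearMap.mkContinuous_norm_le _ hC _, hlim⟩

end WeakLimits

theorem stmt5_general {X : Type*} [NormedAddCommGroup X] [NormedSpace ℝ X]
    (hrefl : Function.Surjective (NormedSpace.inclusionInDoubleDual ℝ X))
    {I : Type*} (P : I → X →L[ℝ] X)
    (hproj : ∀ i, (P i).comp (P i) = P i)
    (hcontr : ∀ i, ‖P i‖ ≤ 1)
    (hcomm : ∀ i j, (P i).comp (P j) = (P j).comp (P i)) :
    ∃ Q : X →L[ℝ] X, Q.comp Q = Q ∧ ‖Q‖ ≤ 1 ∧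
      Set.range Q = ⋂ i, Set.range (P i) := by
  classical
  let R (F : Finset I) : X →L[ℝ] X := F.noncommProd P fun i _ j _ _ ↦ hcomm i j
  let 𝒰 : Ultrafilter (Finset I) := .of atTop
  obtain ⟨Q, hQnorm, hlim⟩ := exists_norm_le_tendsto_toWeakSpace_apply hrefl 𝒰 R
    fun F ↦ norm_noncommProd_le_one _ fun i _ ↦ hcontr i
  have hfix (x : X) (hx : ∀ i, P i x = x) : Q x = x := by
    have hR (F : Finset I) : R F x = x :=
      F.noncommProd_induction P _ (· x = x) (fun A _ hA hB ↦ (congrArg A hB).trans hA) rfl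
        fun i _ ↦ hx i
    refine (toWeakSpace ℝ X).injective (tendsto_nhds_unique (hlim x) ?_)
    simpa only [hR] using tendsto_const_nhds
  have hPQ (i : I) (x : X) : P i (Q x) = Q x := by
    have hev : ∀ᶠ F in (𝒰 : Filter (Finset I)), P i (R F x) = R F x := by
      refine Ultrafilter.of_le atTop ((eventually_ge_atTop {i}).mono fun F hF ↦ ?_)
      exact congr($(IsIdempotentElem.mul_noncommProd_of_mem _ (hF (Finset.mem_singleton_self i))
        (hproj i)) x)
    refine (toWeakSpace ℝ X).injective (tendsto_nhds_unique ?_ (hlim x))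
    exact (((WeakSpace.map (P i)).continuous.tendsto _).comp (hlim x)).congr'
      (hev.mono fun F hF ↦ congrArg _ hF)
  exact ⟨Q, ContinuousLinearMap.ext fun x ↦ hfix _ (hPQ · x), hQnorm,
    range_eq_iInter_range_of_commonFixedPoints (fun i x ↦ congr($(hproj i) x)) hPQ hfix⟩

/-- Corollary 4.2 (cor:2.2): in a reflexive Banach space, the intersection of
the ranges of a commuting family of contractive projections is the range of a
contractive projection. -/
theorem stmt5 {X : Type*} [NormedAddCommGroup X] [NormedSpace ℝ X]
    [CompleteSpace X]
    (hrefl : Function.Surjective (NormedSpace.inclusionInDoubleDual ℝ X))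
    {I : Type*} (P : I → X →L[ℝ] X)
    (hproj : ∀ i, (P i).comp (P i) = P i)
    (hcontr : ∀ i, ‖P i‖ ≤ 1)
    (hcomm : ∀ i j, (P i).comp (P j) = (P j).comp (P i)) :
    ∃ Q : X →L[ℝ] X, Q.comp Q = Q ∧ ‖Q‖ ≤ 1 ∧
      Set.range Q = ⋂ i, Set.range (P i) :=
  stmt5_general hrefl P hproj hcontr hcomm
end

section
/- Let Z be a Banach space which is the dual of a Banach space B, and suppose Z = Z_a ⊕_{ℓ¹} N is an ℓ¹-decomposition such that every extreme point of the closed unit ball Z₁ lies in Z_a. Let Q : Z* → Z* be the adjoint projection corresponding to Z_a, i.e. Q is the norm-one projection of Z* onto (Z_a)* along N*. Then for every a ∈ B, ‖Q(â)‖ = ‖a‖, where â is the canonical image of a in Z* = B**. -/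
open NormedSpace

/-- Lemma lem:316: if `Z = B*` decomposes as an ℓ¹-sum `Z_a ⊕₁ N` (via an
L-projection `P` onto `Z_a`) and every extreme point of the unit ball of `Z`
lies in `Z_a`, then the adjoint projection `Q = P*` of `Z*` onto `(Z_a)*`
satisfies `‖Q â‖ = ‖a‖` for every `a ∈ B`. -/
theorem stmt15 {B : Type*} [NormedAddCommGroup B] [NormedSpace ℝ B]
    [CompleteSpace B]
    (P : StrongDual ℝ B →L[ℝ] StrongDual ℝ B) (hproj : P.comp P = P)
    (hL : ∀ z : StrongDual ℝ B, ‖z‖ = ‖P z‖ + ‖z - P z‖)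
    (hext : ∀ g ∈ Set.extremePoints ℝ (Metric.closedBall (0 : StrongDual ℝ B) 1),
      P g = g) :
    ∀ a : B, ‖(inclusionInDoubleDual ℝ B a).comp P‖ = ‖a‖ := by
  intro a
  have hPle : ∀ z : StrongDual ℝ B, ‖P z‖ ≤ ‖z‖ := fun z => by
    have := hL z; nlinarith [norm_nonneg (z - P z)]
  -- upper bound
  have hub : ‖(inclusionInDoubleDual ℝ B a).comp P‖ ≤ ‖a‖ := by
    refine ContinuousLinearMap.opNorm_le_bound _ (norm_nonneg a) fun z => ?_
    have h1 : ‖(inclusionInDoubleDual ℝ B a) (P z)‖ ≤ ‖P z‖ * ‖a‖ := by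
      simpa [inclusionInDoubleDual] using (P z).le_opNorm a
    calc ‖(inclusionInDoubleDual ℝ B a) (P z)‖ ≤ ‖P z‖ * ‖a‖ := h1
      _ ≤ ‖z‖ * ‖a‖ := mul_le_mul_of_nonneg_right (hPle z) (norm_nonneg a)
      _ = ‖a‖ * ‖z‖ := mul_comm _ _
  rcases eq_or_ne a 0 with rfl | ha
  · exact le_antisymm hub (by rw [norm_zero]; exact ContinuousLinearMap.opNorm_nonneg _)
  -- lower bound: find an extreme point of the unit ball attaining the norm of `a`
  obtain ⟨g, hg1, hga⟩ := exists_dual_vector ℝ a (norm_ne_zero_iff.mpr ha)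
  -- work in the weak-star topology
  let C : Set (WeakDual ℝ B) := WeakDual.toStrongDual ⁻¹' Metric.closedBall 0 1
  let l : WeakDual ℝ B →L[ℝ] ℝ :=
    { toFun := fun f => f a
      map_add' := fun f h => rfl
      map_smul' := fun c f => rfl
      cont := WeakDual.eval_continuous a }
  let S : Set (WeakDual ℝ B) := { x ∈ C | ∀ y ∈ C, l y ≤ l x }
  have hCcomp : IsCompact C := WeakDual.isCompact_closedBall (𝕜 := ℝ) (E := B) 0 1
  have hexp : IsExposed ℝ C S := fun _ => ⟨l, rfl⟩
  have hgC : (g : WeakDual ℝ B) ∈ C := by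
    simp only [C, Set.mem_preimage, Metric.mem_closedBall, dist_zero_right]
    exact mem_closedBall_zero_iff.mpr (le_of_eq hg1)
  have hgS : (g : WeakDual ℝ B) ∈ S := by
    refine ⟨hgC, fun y hy => ?_⟩
    have hy' : ‖WeakDual.toStrongDual y‖ ≤ 1 := by
      simpa [C, dist_zero_right] using hy
    have : ‖(WeakDual.toStrongDual y) a‖ ≤ ‖a‖ := by
      calc ‖(WeakDual.toStrongDual y) a‖ ≤ ‖WeakDual.toStrongDual y‖ * ‖a‖ :=
            ContinuousLinearMap.le_opNorm _ _
        _ ≤ 1 * ‖a‖ := by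
            exact mul_le_mul_of_nonneg_right hy' (norm_nonneg a)
        _ = ‖a‖ := one_mul _
    have hla : l y ≤ ‖a‖ := le_trans (le_abs_self _) this
    exact hla.trans (le_of_eq (show ‖a‖ = g a from hga.symm))
  have hScomp : IsCompact S := hexp.isCompact hCcomp
  haveI : LocallyConvexSpace ℝ (WeakDual ℝ B) := WeakBilin.locallyConvexSpace
  obtain ⟨x, hx⟩ := hScomp.extremePoints_nonempty ⟨g, hgS⟩
  -- `x` is an extreme point of the unit ball
  have hxball : x ∈ Set.extremePoints ℝ C :=
    hexp.isExtreme.extremePoints_subset_extremePoints hx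
  have hxext : (x : StrongDual ℝ B) ∈ Set.extremePoints ℝ (Metric.closedBall (0 : StrongDual ℝ B) 1) := by
    exact hxball
  have hPx : P x = x := hext _ hxext
  have hxa : (x : StrongDual ℝ B) a = ‖a‖ := by
    have h1 : l x ≤ ‖a‖ := by
      have : ‖(WeakDual.toStrongDual x) a‖ ≤ ‖a‖ := by
        have hx' : ‖WeakDual.toStrongDual x‖ ≤ 1 := by
          have := hx.1.1
          simpa [C, dist_zero_right] using this
        calc ‖(WeakDual.toStrongDual x) a‖ ≤ ‖WeakDual.toStrongDual x‖ * ‖a‖ :=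
              ContinuousLinearMap.le_opNorm _ _
          _ ≤ 1 * ‖a‖ := mul_le_mul_of_nonneg_right hx' (norm_nonneg a)
          _ = ‖a‖ := one_mul _
      exact le_trans (le_abs_self _) this
    have h2 : ‖a‖ ≤ l x := by
      have := hx.1.2 g hgC
      exact (le_of_eq (show ‖a‖ = g a from hga.symm)).trans this
    exact le_antisymm h1 h2
  -- lower bound
  have hlb : ‖a‖ ≤ ‖(inclusionInDoubleDual ℝ B a).comp P‖ := by
    set x' : StrongDual ℝ B := WeakDual.toStrongDual x with hx'def
    have hval : ((inclusionInDoubleDual ℝ B a).comp P) x' = ‖a‖ := by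
      have hPx' : P x' = x' := hPx
      simp only [ContinuousLinearMap.comp_apply, hPx', inclusionInDoubleDual]
      exact hxa
    have hx1 : ‖x'‖ ≤ 1 := by
      have := hx.1.1
      simpa [C, dist_zero_right] using this
    calc ‖a‖ = ‖((inclusionInDoubleDual ℝ B a).comp P) x'‖ := by
          rw [hval]; exact (Real.norm_of_nonneg (norm_nonneg a)).symm
      _ ≤ ‖(inclusionInDoubleDual ℝ B a).comp P‖ * ‖x'‖ :=
          ContinuousLinearMap.le_opNorm _ _
      _ ≤ ‖(inclusionInDoubleDual ℝ B a).comp P‖ * 1 :=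
          mul_le_mul_of_nonneg_left hx1 (ContinuousLinearMap.opNorm_nonneg _)
      _ = _ := mul_one _
  exact le_antisymm hub hlb
end

section
/- Let J be a closed left ideal in a C*-algebra A possessing a right identity e of norm 1 (x·e = x for all x ∈ J). Then x·e* = x and x = x·e*·e for all x ∈ J; in particular e is a partial isometry (e·e*·e = e). -/
/-- Remark preceding Theorem C: if a closed left ideal `J` in a C*-algebra has
a right identity `e` of norm one, then `x e* = x` and `x = x e* e` for all
`x ∈ J`; in particular `e` is a partial isometry. -/
theorem stmt17 {A : Type*} [NormedRing A] [StarRing A] [CStarRing A]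
    [NormedAlgebra ℂ A] [StarModule ℂ A] [CompleteSpace A]
    (J : Submodule ℂ A) (hJclosed : IsClosed (J : Set A))
    (hJleft : ∀ a : A, ∀ x ∈ J, a * x ∈ J)
    (e : A) (he : e ∈ J) (hnorm : ‖e‖ = 1)
    (hre : ∀ x ∈ J, x * e = x) :
    (∀ x ∈ J, x * star e = x ∧ x = x * star e * e) ∧ e * star e * e = e := by
  letI : CStarAlgebra A := {}
  letI := CStarAlgebra.spectralOrder A
  haveI := CStarAlgebra.spectralOrderedRing A
  -- `e` is idempotent since it is a right identity and belongs to `J`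
  have he2 : e * e = e := hre e he
  have hs2 : star e * star e = star e := by rw [← star_mul, he2]
  -- `e` is self-adjoint: a norm-one idempotent in a C*-algebra is a projection
  have hstar : star e = e := by
    have ha : 0 ≤ star e * e := star_mul_self_nonneg e
    have ha1 : star e * e ≤ 1 := by
      rw [← CStarAlgebra.norm_le_one_iff_of_nonneg (star e * e) ha,
        CStarRing.norm_star_mul_self, hnorm]
      norm_num
    have hsq : (star e * e) ^ 2 ≤ star e * e := by
      simpa using CStarAlgebra.pow_antitone ha ha1 (by norm_num : 1 ≤ 2)
    -- key identity: (e* - e*e)(e* - e*e)* = (e*e)² - e*e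
    have hyy : (star e - star e * e) * star (star e - star e * e)
        = (star e * e) ^ 2 - star e * e := by
      have hsy : star (star e - star e * e) = e - star e * e := by
        simp [star_sub, star_mul, star_star]
      rw [hsy]
      have expand : (star e - star e * e) * (e - star e * e)
          = star e * e - (star e * star e) * e - star e * (e * e)
            + (star e * e) * (star e * e) := by noncomm_ring
      rw [expand, hs2, he2]
      noncomm_ring
    have hy0 : star e - star e * e = 0 := by
      refine (CStarRing.mul_star_self_eq_zero_iff _).mp (le_antisymm ?_ (mul_star_self_nonneg _))
      rw [hyy]
      simpa using hsq
    have h3 : star e = star e * e := by rwa [sub_eq_zero] at hy0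
    have h4 : e = star e * e := by
      have := congrArg star h3
      rwa [star_star, star_mul, star_star] at this
    exact h3.trans h4.symm
  refine ⟨fun x hx => ⟨by rw [hstar]; exact hre x hx, ?_⟩, ?_⟩
  · rw [hstar, hre x hx, hre x hx]
  · rw [hstar, he2, he2]
end
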